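/- For n ≥ 1 let φ_exp = ⋀_{i=1}^n □^{i-1}(◇□^{n-i} p_i ∧ ◇□^{n-i} p̄_i). If M is a model and w a world with M,w ⊨ φ_exp, then for every truth assignment α : {1,…,n} → {true, false} there exists a world w' reachable from w by an R-path of length exactly n such that for every i ∈ {1,…,n}, M,w' ⊨ p_i if and only if α(i) = true. -/

import Mathlib

namespace PoorMansModal

/-- Modal formulas over propositional variables of type `α`: variables `p`,
negated variables `p̄`, general negation, conjunction, disjunction, box, diamond,
and the constants `true` and `false`. -/
inductive Fml (α : Type) : Type where
  | var : α → Fml α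
  | nvar : α → Fml α
  | neg : Fml α → Fml α
  | and : Fml α → Fml α → Fml α
  | or : Fml α → Fml α → Fml α
  | box : Fml α → Fml α
  | dia : Fml α → Fml α
  | tru : Fml α
  | fls : Fml α

/-- A Kripke model: a nonempty set of worlds, an accessibility relation, and a valuation. -/
structure Kripke (α : Type) where
  World : Type
  nonempty : Nonempty World
  R : World → World → Prop
  V : α → World → Prop

/-- Truth of a formula at a world of a model. -/
def Sat {α : Type} (M : Kripke α) : Fml α → M.World → Prop
  | .var p, w => M.V p w
  | .nvar p, w => ¬ M.V p w
  | .neg φ, w => ¬ Sat M φ w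
  | .and φ ψ, w => Sat M φ w ∧ Sat M ψ w
  | .or φ ψ, w => Sat M φ w ∨ Sat M ψ w
  | .box φ, w => ∀ v, M.R w v → Sat M φ v
  | .dia φ, w => ∃ v, M.R w v ∧ Sat M φ v
  | .tru, _ => True
  | .fls, _ => False

/-- Modal depth: depth of nesting of `□` and `◇`. -/
def mdep {α : Type} : Fml α → ℕ
  | .var _ => 0
  | .nvar _ => 0
  | .neg φ => mdep φ
  | .and φ ψ => max (mdep φ) (mdep ψ)
  | .or φ ψ => max (mdep φ) (mdep ψ)
  | .box φ => mdep φ + 1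
  | .dia φ => mdep φ + 1
  | .tru => 0
  | .fls => 0

/-- Conjunction of a list of formulas; the empty conjunction is the always-true formula. -/
def bigConj {α : Type} : List (Fml α) → Fml α
  | [] => .tru
  | [φ] => φ
  | φ :: rest => .and φ (bigConj rest)

/-- `□^k φ`. -/
def boxI {α : Type} : ℕ → Fml α → Fml α
  | 0, φ => φ
  | k + 1, φ => .box (boxI k φ)

/-- `◇^k φ`. -/
def diaI {α : Type} : ℕ → Fml α → Fml α
  | 0, φ => φ
  | k + 1, φ => .dia (diaI k φ)

/-- `(◇□)^k φ`. -/
def diaBoxI {α : Type} : ℕ → Fml α → Fml α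
  | 0, φ => φ
  | k + 1, φ => .dia (.box (diaBoxI k φ))

/-- The literal with variable `l.1` and sign `l.2` (`true` = positive). -/
def litF {α : Type} (l : α × Bool) : Fml α := if l.2 then .var l.1 else .nvar l.1

/-- The variable `p` occurs in the formula. -/
def occursV {α : Type} (p : α) : Fml α → Prop
  | .var q => p = q
  | .nvar q => p = q
  | .neg φ => occursV p φ
  | .and φ ψ => occursV p φ ∨ occursV p ψ
  | .or φ ψ => occursV p φ ∨ occursV p ψ
  | .box φ => occursV p φ
  | .dia φ => occursV p φ
  | .tru => False
  | .fls => False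

/-- Poor man's formulas: built from literals, `∧`, `□`, `◇` only. -/
def PoorF {α : Type} : Fml α → Prop
  | .var _ => True
  | .nvar _ => True
  | .and φ ψ => PoorF φ ∧ PoorF ψ
  | .box φ => PoorF φ
  | .dia φ => PoorF φ
  | _ => False

/-- Formulas of the language `L`: built from literals, `∧`, `∨`, `□`, `◇`. -/
def InL {α : Type} : Fml α → Prop
  | .var _ => True
  | .nvar _ => True
  | .and φ ψ => InL φ ∧ InL ψ
  | .or φ ψ => InL φ ∧ InL ψ
  | .box φ => InL φ
  | .dia φ => InL φ
  | _ => False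

/-- Every world has at most one successor. -/
def AtMostOne {W : Type} (R : W → W → Prop) : Prop :=
  ∀ w v v', R w v → R w v' → v = v'

/-- Every world has at least one successor. -/
def AtLeastOne {W : Type} (R : W → W → Prop) : Prop :=
  ∀ w, ∃ v, R w v

/-- Every world has at most two successors. -/
def AtMostTwo {W : Type} (R : W → W → Prop) : Prop :=
  ∀ w v₁ v₂ v₃, R w v₁ → R w v₂ → R w v₃ → v₁ = v₂ ∨ v₁ = v₃ ∨ v₂ = v₃

/-- `chainR R n w v`: there is an `R`-path of length exactly `n` from `w` to `v`. -/
def chainR {W : Type} (R : W → W → Prop) : ℕ → W → W → Prop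
  | 0, w, v => w = v
  | k + 1, w, v => ∃ u, R w u ∧ chainR R k u v

/-- `R` is the parent-child relation of a rooted tree with root `root`
in which every node has at most two children. -/
structure IsBinTree {W : Type} (R : W → W → Prop) (root : W) : Prop where
  reach : ∀ w, Relation.ReflTransGen R root w
  root_no_parent : ∀ w, ¬ R w root
  unique_parent : ∀ w v v', R v w → R v' w → v = v'
  acyclic : ∀ w, ¬ Relation.TransGen R w w
  at_most_two_children : ∀ w v₁ v₂ v₃, R w v₁ → R w v₂ → R w v₃ → v₁ = v₂ ∨ v₁ = v₃ ∨ v₂ = v₃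

/-- `φ_exp = ⋀_{i=1}^n □^{i-1}(◇□^{n-i} p_i ∧ ◇□^{n-i} p̄_i)`, with `p_i = var i`. -/
def phiExp (n : ℕ) : Fml ℕ :=
  bigConj ((List.range n).map (fun j =>
    boxI j (.and (.dia (boxI (n - 1 - j) (.var (j + 1))))
                 (.dia (boxI (n - 1 - j) (.nvar (j + 1)))))))

/-- Satisfiability with respect to the class of all frames. -/
def SatAll (φ : Fml ℕ) : Prop := ∃ (M : Kripke ℕ) (w : M.World), Sat M φ w

/-- Satisfiability with respect to `F≤1`. -/
def SatLe1 (φ : Fml ℕ) : Prop := ∃ M : Kripke ℕ, AtMostOne M.R ∧ ∃ w, Sat M φ w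

/-- Satisfiability with respect to `F≥1`. -/
def SatGe1 (φ : Fml ℕ) : Prop := ∃ M : Kripke ℕ, AtLeastOne M.R ∧ ∃ w, Sat M φ w

/-- Satisfiability with respect to `F≤2`. -/
def SatLe2 (φ : Fml ℕ) : Prop := ∃ M : Kripke ℕ, AtMostTwo M.R ∧ ∃ w, Sat M φ w

/-- A one-world model with no successors, realizing the boolean assignment `v`;
truth at its world is propositional truth for formulas without modal operators. -/
def propModel (v : ℕ → Bool) : Kripke ℕ :=
  { World := Unit, nonempty := ⟨()⟩, R := fun _ _ => False, V := fun p _ => v p = true }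

/-- Propositional satisfaction of `φ` under the assignment `v`. -/
def PropSat (v : ℕ → Bool) (φ : Fml ℕ) : Prop := Sat (propModel v) φ ()

/-!
Walk down from `w` one level at a time. The conjunct `□^{m}(◇□^{n-m-1} p_{m+1} ∧ ◇□^{n-m-1} p̄_{m+1})`
of `φ_exp` holds at the world `u` reached after `m` steps, so `u` has a successor forcing
`□^{n-m-1}` of the literal of `p_{m+1}` chosen by `α`. The literals chosen earlier are boxed
deeply enough to survive the remaining steps, and after `n` steps all of them hold.
-/

section Chains

variable {W : Type} {R : W → W → Prop}

theorem chainR_succ_of_chainR_of_rel {m : ℕ} {w u v : W} (h : chainR R m w u) (hr : R u v) :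
    chainR R (m + 1) w v := by
  induction m generalizing w with
  | zero => exact h ▸ ⟨v, hr, rfl⟩
  | succ m ih =>
    obtain ⟨x, hx, hc⟩ := h
    exact ⟨x, hx, ih hc⟩

end Chains

section Semantics

variable {β : Type} (M : Kripke β)

theorem sat_bigConj (L : List (Fml β)) (w : M.World) :
    Sat M (bigConj L) w ↔ ∀ φ ∈ L, Sat M φ w := by
  induction L with
  | nil => simp [bigConj, Sat]
  | cons φ rest ih =>
    cases rest with
    | nil => simp [bigConj]
    | cons ψ rest' =>
      simp only [bigConj, Sat, ih, List.forall_mem_cons]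

theorem sat_boxI (k : ℕ) (φ : Fml β) (w : M.World) :
    Sat M (boxI k φ) w ↔ ∀ v, chainR M.R k w v → Sat M φ v := by
  induction k generalizing w with
  | zero => simp [boxI, chainR]
  | succ k ih =>
    simp only [boxI, chainR, Sat, ih]
    grind

theorem sat_litF (p : β) (b : Bool) (w : M.World) :
    Sat M (litF (p, b)) w ↔ (M.V p w ↔ b = true) := by
  cases b <;> simp [litF, Sat]

theorem exists_rel_sat_boxI_litF {k : ℕ} {p : β} {u : M.World}
    (h : Sat M (.and (.dia (boxI k (.var p))) (.dia (boxI k (.nvar p)))) u) (b : Bool) :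
    ∃ v, M.R u v ∧ Sat M (boxI k (litF (p, b))) v := by
  cases b
  exacts [h.2, h.1]

end Semantics

theorem sat_phiExp_iff {M : Kripke ℕ} {n : ℕ} {w : M.World} :
    Sat M (phiExp n) w ↔ ∀ j < n, ∀ u, chainR M.R j w u →
      Sat M (.and (.dia (boxI (n - 1 - j) (.var (j + 1))))
        (.dia (boxI (n - 1 - j) (.nvar (j + 1))))) u := by
  simp only [phiExp, sat_bigConj, List.forall_mem_map, List.mem_range, sat_boxI]

theorem exists_chainR_sat_boxI_litF {M : Kripke ℕ} {n : ℕ} {w : M.World}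
    (h : Sat M (phiExp n) w) (α : ℕ → Bool) {m : ℕ} (hm : m ≤ n) :
    ∃ u, chainR M.R m w u ∧ ∀ i, 1 ≤ i → i ≤ m → Sat M (boxI (n - m) (litF (i, α i))) u := by
  induction m with
  | zero => exact ⟨w, rfl, fun i hi hi' => absurd hi' (by omega)⟩
  | succ m ih =>
    obtain ⟨u, hwu, hu⟩ := ih (by omega)
    obtain ⟨v, huv, hv⟩ :=
      exists_rel_sat_boxI_litF M (sat_phiExp_iff.1 h m (by omega) u hwu) (α (m + 1))
    refine ⟨v, chainR_succ_of_chainR_of_rel hwu huv, fun i hi hi' => ?_⟩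
    rcases Nat.lt_or_eq_of_le hi' with hlt | rfl
    · have hdepth : n - m = n - (m + 1) + 1 := by omega
      exact (hdepth ▸ hu i hi (by omega)) v huv
    · rwa [show n - 1 - m = n - (m + 1) by omega] at hv

theorem stmt5_general (n : ℕ) (M : Kripke ℕ) (w : M.World)
    (h : Sat M (phiExp n) w) (α : ℕ → Bool) :
    ∃ w', chainR M.R n w w' ∧ ∀ i, 1 ≤ i → i ≤ n → (M.V i w' ↔ α i = true) := by
  obtain ⟨w', hww', hw'⟩ := exists_chainR_sat_boxI_litF h α le_rfl
  refine ⟨w', hww', fun i hi hi' => ?_⟩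
  simpa only [Nat.sub_self, boxI, sat_litF] using hw' i hi hi'

/-- If `M, w ⊨ φ_exp` then for every truth assignment `α` to `p₁, …, p_n`
there is a world `w'` reachable from `w` by an `R`-path of length exactly `n` that
realizes `α` on `p₁, …, p_n`. -/
theorem stmt5 (n : ℕ) (hn : 1 ≤ n) (M : Kripke ℕ) (w : M.World)
    (h : Sat M (phiExp n) w) (α : ℕ → Bool) :
    ∃ w', chainR M.R n w w' ∧ ∀ i, 1 ≤ i → i ≤ n → (M.V i w' ↔ α i = true) :=
  stmt5_general n M w h α

end PoorMansModal
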